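/- Fix q ∈ (0,1) and an integer j > q/(1−q). For every ψ ∈ 𝓗 and every σ > 0, there exists φ ∈ 𝓗 with ‖ψ − φ‖² < 2σ² and D⁺_{μ_φ}(q) ≥ (1 − (1 + 1/j)q)/(3(1−q)). In particular, the set {ψ ∈ 𝓗 : D⁺_{μ_ψ}(q) ≥ (1 − (1 + 1/j)q)/(3(1−q))} is dense in 𝓗. -/

import Mathlib

open MeasureTheory Filter Set Topology ENNReal

noncomputable section

/-- `I_μ(q, ε) = ∫ μ(B(x,ε))^{q-1} dμ(x)`, integrated over `{x : μ(B(x,ε)) > 0}`. -/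
def fracIntegral (μ : Measure ℝ) (q ε : ℝ) : ℝ≥0∞ :=
  ∫⁻ x in {x : ℝ | 0 < μ (Ioo (x - ε) (x + ε))}, μ (Ioo (x - ε) (x + ε)) ^ (q - 1) ∂μ

/-- lower q-generalized fractal dimension. -/
def Dlower (μ : Measure ℝ) (q : ℝ) : ℝ :=
  liminf (fun ε : ℝ => Real.log (fracIntegral μ q ε).toReal / ((q - 1) * Real.log ε)) (𝓝[>] 0)

/-- upper q-generalized fractal dimension. -/
def Dupper (μ : Measure ℝ) (q : ℝ) : ℝ :=
  limsup (fun ε : ℝ => Real.log (fracIntegral μ q ε).toReal / ((q - 1) * Real.log ε)) (𝓝[>] 0)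

/-- index set of the hydrogen orbitals. -/
structure HIndex where
  n : ℕ
  l : ℕ
  m : ℤ
  hn : 1 ≤ n
  hl : l < n
  hm : -(l : ℤ) ≤ m ∧ m ≤ (l : ℤ)

instance : Fact ((1 : ℝ≥0∞) ≤ 2) := ⟨one_le_two⟩

/-- the bound-state space -/
abbrev Hspace := lp (fun _ : HIndex => ℂ) 2

/-- eigenvalues of the hydrogen Hamiltonian -/
def lam (Λ : ℝ) (n : ℕ) : ℝ := -Λ / (n : ℝ) ^ 2

/-- spectral measure of a bound state -/
def specMeasure (Λ : ℝ) (ψ : Hspace) : Measure ℝ :=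
  Measure.sum fun i : HIndex =>
    ENNReal.ofReal (‖ψ i‖ ^ 2) • Measure.dirac (lam Λ i.n)

/-!
Perturb `ψ` by a small `ℓ²` vector so that the `s`-orbital coefficients satisfy
`‖φ (n,0,0)‖² ≥ c n^{-γ}` with `γ = 1 + 1/j > 1`; the perturbation costs at most `4 c ζ(γ)`,
which is small for small `c`. Then `μ_φ` has atoms `μ_φ {λ_n} ≥ c n^{-γ}`.

At the scale `ε_N = Λ / (2 N³)` every eigenvalue other than `λ_n` lies at distance `≥ ε_N`
from `λ_n` when `n ≤ N` (the gaps `λ_{n+1} - λ_n ≈ 2Λ / n³`), so each ball `B(λ_n, ε_N)`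
only sees its own atom and `I(q, ε_N) ≥ ∑_{n ≤ N} μ_φ {λ_n}^q ≥ c^q N^{1 - γq}`; hence
`ln I / ((q - 1) ln ε_N) → (1 - γq) / (3(1 - q))`.

Every ball around an atom also has mass `≳ ε^γ`, so `I(q, ε)` grows at most polynomially in
`1/ε`: the quotient is bounded above near `0`, which is what makes the real `limsup` dominate
its limit along `ε_N`.
-/

namespace ENNReal

theorem rpow_le_rpow_of_nonpos {x y : ℝ≥0∞} {z : ℝ} (hz : z ≤ 0) (h : x ≤ y) :
    y ^ z ≤ x ^ z := by
  simpa [rpow_neg] using ENNReal.inv_le_inv.2 (rpow_le_rpow h (neg_nonneg.2 hz))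

end ENNReal

theorem le_limsup_of_tendsto_of_eventually_le {α β : Type*} {l : Filter α} {lb : Filter β}
    [lb.NeBot] {f : α → ℝ} {u : β → α} {g : β → ℝ} {a : ℝ}
    (hf : IsBoundedUnder (· ≤ ·) l f) (hu : Tendsto u lb l) (hg : Tendsto g lb (𝓝 a))
    (hgf : ∀ᶠ b in lb, g b ≤ f (u b)) : a ≤ limsup f l := by
  refine le_of_forall_lt_imp_le_of_dense fun c hc ↦ le_limsup_of_frequently_le ?_ hf
  have : ∀ᶠ b in lb, c ≤ f (u b) := by
    filter_upwards [hg.eventually (eventually_gt_nhds hc), hgf] with b h1 h2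
    exact h1.le.trans h2
  exact hu.frequently this.frequently

theorem tendsto_add_mul_div_add_mul_atTop (a b c d : ℝ) (hd : d ≠ 0) :
    Tendsto (fun x ↦ (a + b * x) / (c + d * x)) atTop (𝓝 (b / d)) := by
  have hinv := tendsto_inv_atTop_zero (𝕜 := ℝ)
  have := ((hinv.const_mul a).add_const b).div ((hinv.const_mul c).add_const d)
    (by simpa using hd)
  rw [mul_zero, zero_add, mul_zero, zero_add] at this
  refine this.congr' ?_
  filter_upwards [eventually_gt_atTop 0] with x hx
  simp only [Pi.div_apply]
  field_simp

def dimQuotient (μ : Measure ℝ) (q ε : ℝ) : ℝ :=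
  Real.log (fracIntegral μ q ε).toReal / ((q - 1) * Real.log ε)

theorem Dupper_eq_limsup (μ : Measure ℝ) (q : ℝ) :
    Dupper μ q = limsup (dimQuotient μ q) (𝓝[>] 0) := rfl

section FracIntegral

variable {μ : Measure ℝ} {q ε : ℝ}

theorem fracIntegral_le_of_ae_le_measure_Ioo (hq : q ≤ 1) {b : ℝ≥0∞}
    (h : ∀ᵐ x ∂μ, b ≤ μ (Ioo (x - ε) (x + ε))) : fracIntegral μ q ε ≤ μ univ * b ^ (q - 1) :=
  calc fracIntegral μ q ε
      ≤ ∫⁻ _ in {x : ℝ | 0 < μ (Ioo (x - ε) (x + ε))}, b ^ (q - 1) ∂μ :=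
        lintegral_mono_ae <| ae_restrict_of_ae <| h.mono fun _ hx ↦
          ENNReal.rpow_le_rpow_of_nonpos (by linarith) hx
    _ ≤ μ univ * b ^ (q - 1) := by
        rw [setLIntegral_const, mul_comm]
        gcongr
        exact subset_univ _

theorem sum_rpow_mul_le_fracIntegral (s : Finset ℝ) (hs : ∀ x ∈ s, 0 < μ {x}) (hε : 0 < ε) :
    ∑ x ∈ s, μ (Ioo (x - ε) (x + ε)) ^ (q - 1) * μ {x} ≤ fracIntegral μ q ε := by
  rw [← lintegral_finset]
  refine lintegral_mono_set fun x hx ↦ (hs x hx).trans_le (measure_mono ?_)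
  simpa using hε

theorem isBoundedUnder_dimQuotient (hq : q < 1) {C p : ℝ} (hC : 0 < C)
    (h : ∀ ε ∈ Ioo (0 : ℝ) 1, fracIntegral μ q ε ≤ ENNReal.ofReal (C * ε ^ (-p))) :
    IsBoundedUnder (· ≤ ·) (𝓝[>] 0) (dimQuotient μ q) := by
  refine isBoundedUnder_of_eventually_le (a := (|Real.log C| + |p|) / (1 - q)) ?_
  filter_upwards [Ioo_mem_nhdsGT (Real.exp_pos (-1))] with ε ⟨hε0, hε⟩
  have hε1 : ε < 1 := hε.trans (Real.exp_lt_one_iff.2 (by norm_num))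
  set L := -Real.log ε
  have hL : 1 ≤ L := by
    have := Real.log_lt_log hε0 hε
    rw [Real.log_exp] at this
    linarith
  have hI : (fracIntegral μ q ε).toReal ≤ C * ε ^ (-p) :=
    ENNReal.toReal_le_of_le_ofReal (by positivity) (h ε ⟨hε0, hε1⟩)
  -- `log 0 = 0`, so the bound `|log (C ε^{-p})|` also covers a vanishing integral
  have hlog : Real.log (fracIntegral μ q ε).toReal ≤ |Real.log C| + |p| * L := by
    have hCε : |Real.log (C * ε ^ (-p))| ≤ |Real.log C| + |p| * L := by
      rw [Real.log_mul hC.ne' (by positivity), Real.log_rpow hε0]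
      refine (abs_add_le _ _).trans (add_le_add le_rfl ?_)
      rw [abs_mul, abs_neg, abs_of_neg (Real.log_neg hε0 hε1)]
    rcases (ENNReal.toReal_nonneg (a := fracIntegral μ q ε)).eq_or_lt with h0 | hpos
    · rw [← h0, Real.log_zero]
      exact (abs_nonneg _).trans hCε
    · exact (Real.log_le_log hpos hI).trans ((le_abs_self _).trans hCε)
  have hden : (q - 1) * Real.log ε = (1 - q) * L := by ring
  rw [dimQuotient, hden, div_le_div_iff₀ (by nlinarith) (by linarith)]
  have hlog' : Real.log (fracIntegral μ q ε).toReal ≤ (|Real.log C| + |p|) * L := by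
    nlinarith [abs_nonneg (Real.log C)]
  have := mul_le_mul_of_nonneg_right hlog' (sub_nonneg.2 hq.le)
  linarith

end FracIntegral

section L2

variable {ι : Type*} {E : ι → Type*} [∀ i, NormedAddCommGroup (E i)]

theorem memℓp_two_iff_summable_norm_sq {f : ∀ i, E i} :
    Memℓp f 2 ↔ Summable fun i ↦ ‖f i‖ ^ 2 := by
  rw [memℓp_gen_iff (by norm_num)]
  norm_num

theorem lp.norm_sq_eq_tsum (f : lp E 2) : ‖f‖ ^ 2 = ∑' i, ‖f i‖ ^ 2 := by
  have := lp.norm_rpow_eq_tsum (by norm_num : 0 < (2 : ℝ≥0∞).toReal) f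
  norm_num at this
  exact_mod_cast this

theorem exists_norm_sq_le_and_le_norm_add_sq {𝕜 : Type*} [RCLike 𝕜] (z : 𝕜) {s : ℝ}
    (hs : 0 ≤ s) : ∃ d : 𝕜, ‖d‖ ^ 2 ≤ 4 * s ∧ s ≤ ‖z + d‖ ^ 2 := by
  have ht : Real.sqrt s ^ 2 = s := Real.sq_sqrt hs
  by_cases hz : Real.sqrt s ≤ ‖z‖
  · refine ⟨0, by simp; positivity, ?_⟩
    rw [add_zero, ← ht]
    gcongr
  · refine ⟨(Real.sqrt s : 𝕜) - z, ?_, ?_⟩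
    · have : ‖(Real.sqrt s : 𝕜) - z‖ ≤ 2 * Real.sqrt s := by
        refine (norm_sub_le _ _).trans ?_
        rw [RCLike.norm_ofReal, abs_of_nonneg (Real.sqrt_nonneg s)]
        linarith
      nlinarith [norm_nonneg ((Real.sqrt s : 𝕜) - z)]
    · rw [add_sub_cancel, RCLike.norm_ofReal, sq_abs, ht]

theorem exists_lp_le_norm_sq_and_norm_sub_sq_le {𝕜 : Type*} [RCLike 𝕜]
    (ψ : lp (fun _ : ι ↦ 𝕜) 2) {r : ι → ℝ} (hr0 : ∀ i, 0 ≤ r i) (hr : Summable r) :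
    ∃ φ : lp (fun _ : ι ↦ 𝕜) 2, (∀ i, r i ≤ ‖φ i‖ ^ 2) ∧ ‖ψ - φ‖ ^ 2 ≤ 4 * ∑' i, r i := by
  choose d hd_le hd_ge using fun i ↦ exists_norm_sq_le_and_le_norm_add_sq (ψ i) (hr0 i)
  have hsum : Summable fun i ↦ ‖d i‖ ^ 2 :=
    .of_nonneg_of_le (fun _ ↦ sq_nonneg _) hd_le (hr.mul_left 4)
  let D : lp (fun _ : ι ↦ 𝕜) 2 := ⟨d, memℓp_two_iff_summable_norm_sq.2 hsum⟩
  refine ⟨ψ + D, hd_ge, ?_⟩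
  rw [sub_add_cancel_left, norm_neg, lp.norm_sq_eq_tsum, ← tsum_mul_left]
  exact hsum.tsum_le_tsum hd_le (hr.mul_left 4)

end L2

section Spectrum

variable {Λ : ℝ}

theorem lam_sub_lam (Λ : ℝ) (m n : ℕ) :
    lam Λ n - lam Λ m = Λ * (1 / (m : ℝ) ^ 2 - 1 / (n : ℝ) ^ 2) := by
  unfold lam
  ring

theorem one_div_sq_sub_one_div_sq_ge {k l N : ℕ} (hk : 1 ≤ k) (hkl : k < l) (hkN : k ≤ N) :
    1 / (2 * (N : ℝ) ^ 3) ≤ 1 / (k : ℝ) ^ 2 - 1 / (l : ℝ) ^ 2 := by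
  have hk' : (1 : ℝ) ≤ k := by exact_mod_cast hk
  have hkl' : (k : ℝ) + 1 ≤ l := by exact_mod_cast hkl
  calc 1 / (2 * (N : ℝ) ^ 3) ≤ 1 / (2 * (k : ℝ) ^ 3) := by gcongr
    _ ≤ 1 / (k : ℝ) ^ 2 - 1 / ((k : ℝ) + 1) ^ 2 := by
        rw [div_sub_div _ _ (by positivity) (by positivity), div_le_div_iff₀ (by positivity)
          (by positivity)]
        nlinarith [pow_le_pow_left₀ zero_le_one hk' 3]
    _ ≤ 1 / (k : ℝ) ^ 2 - 1 / (l : ℝ) ^ 2 := by gcongr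

theorem le_abs_lam_sub_lam (hΛ : 0 < Λ) {m n N : ℕ} (hm : 1 ≤ m) (hn : 1 ≤ n) (hmn : m ≠ n)
    (hnN : n ≤ N) : Λ / (2 * (N : ℝ) ^ 3) ≤ |lam Λ m - lam Λ n| := by
  rw [div_eq_mul_one_div]
  rcases hmn.lt_or_gt with h | h
  · rw [abs_sub_comm, lam_sub_lam, abs_mul, abs_of_pos hΛ]
    gcongr
    exact (one_div_sq_sub_one_div_sq_ge hm h (h.le.trans hnN)).trans (le_abs_self _)
  · rw [lam_sub_lam, abs_mul, abs_of_pos hΛ]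
    gcongr
    exact (one_div_sq_sub_one_div_sq_ge hn h hnN).trans (le_abs_self _)

theorem abs_lam_sub_lam_lt (hΛ : 0 < Λ) {M n : ℕ} (hM : 1 ≤ M) (hMn : M ≤ n) :
    |lam Λ n - lam Λ M| < Λ / M := by
  have hM' : (1 : ℝ) ≤ M := by exact_mod_cast hM
  have hMn' : (M : ℝ) ≤ n := by exact_mod_cast hMn
  have hn' : (0 : ℝ) < n := by linarith
  have hsq : 1 / (n : ℝ) ^ 2 ≤ 1 / (M : ℝ) ^ 2 := by gcongr
  rw [lam_sub_lam, abs_of_nonneg (mul_nonneg hΛ.le (by linarith))]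
  calc Λ * (1 / (M : ℝ) ^ 2 - 1 / (n : ℝ) ^ 2) < Λ * (1 / (M : ℝ) ^ 2) := by
        gcongr; exact sub_lt_self _ (by positivity)
    _ ≤ Λ / M := by
        rw [mul_one_div]
        gcongr
        nlinarith

theorem tendsto_div_two_mul_pow_three_nhdsGT {Λ : ℝ} (hΛ : 0 < Λ) :
    Tendsto (fun N : ℕ ↦ Λ / (2 * (N : ℝ) ^ 3)) atTop (𝓝[>] 0) := by
  refine tendsto_nhdsWithin_iff.2 ⟨tendsto_const_nhds.div_atTop ?_, ?_⟩
  · exact ((tendsto_pow_atTop (by norm_num)).comp tendsto_natCast_atTop_atTop).const_mul_atTop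
      (by norm_num)
  · filter_upwards [eventually_gt_atTop 0] with N hN
    exact div_pos hΛ (by positivity)

end Spectrum

structure PowerLawAtoms (Λ c γ : ℝ) (μ : Measure ℝ) : Prop where
  measure_eq_zero : ∀ s, (∀ n, 1 ≤ n → lam Λ n ∉ s) → μ s = 0
  ofReal_le_atom : ∀ n : ℕ, 1 ≤ n → ENNReal.ofReal (c * (n : ℝ) ^ (-γ)) ≤ μ {lam Λ n}

namespace PowerLawAtoms

variable {Λ c γ q : ℝ} {μ : Measure ℝ}

theorem measure_Ioo_eq_atom (h : PowerLawAtoms Λ c γ μ) (hΛ : 0 < Λ) {n N : ℕ} (hn : 1 ≤ n)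
    (hnN : n ≤ N) :
    μ (Ioo (lam Λ n - Λ / (2 * (N : ℝ) ^ 3)) (lam Λ n + Λ / (2 * (N : ℝ) ^ 3))) =
      μ {lam Λ n} := by
  have hN : (0 : ℝ) < N := by exact_mod_cast hn.trans hnN
  refine (measure_eq_measure_of_null_sdiff (by simp; positivity) ?_).symm
  refine h.measure_eq_zero _ fun m hm ⟨hmem, hne⟩ ↦ ?_
  have hmn : m ≠ n := fun hmn ↦ hne (hmn ▸ rfl)
  have hlt : |lam Λ m - lam Λ n| < Λ / (2 * (N : ℝ) ^ 3) := by
    rw [abs_sub_lt_iff]; constructor <;> linarith [hmem.1, hmem.2]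
  exact (le_abs_lam_sub_lam hΛ hm hn hmn hnN).not_gt hlt

theorem ofReal_le_measure_Ioo_of_div_lt (h : PowerLawAtoms Λ c γ μ) (hΛ : 0 < Λ) (hc : 0 ≤ c)
    (hγ : 0 ≤ γ) {ε : ℝ} {M n : ℕ} (hM : 1 ≤ M) (hMε : Λ / M < ε) (hn : 1 ≤ n) :
    ENNReal.ofReal (c * (M : ℝ) ^ (-γ)) ≤ μ (Ioo (lam Λ n - ε) (lam Λ n + ε)) := by
  rcases le_or_gt M n with hMn | hnM
  · have hmem : lam Λ M ∈ Ioo (lam Λ n - ε) (lam Λ n + ε) := by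
      have := abs_lam_sub_lam_lt hΛ hM hMn
      rw [abs_sub_lt_iff] at this
      constructor <;> linarith
    exact (h.ofReal_le_atom M hM).trans (measure_mono (singleton_subset_iff.2 hmem))
  · have hmem : lam Λ n ∈ Ioo (lam Λ n - ε) (lam Λ n + ε) := by
      have : 0 < ε := lt_of_le_of_lt (by positivity) hMε
      constructor <;> linarith
    refine le_trans ?_ ((h.ofReal_le_atom n hn).trans (measure_mono (singleton_subset_iff.2 hmem)))
    have hn' : (0 : ℝ) < n := by exact_mod_cast hn
    exact ENNReal.ofReal_le_ofReal (mul_le_mul_of_nonneg_left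
      (Real.rpow_le_rpow_of_nonpos hn' (by exact_mod_cast hnM.le) (by linarith)) hc)

theorem ofReal_le_measure_Ioo (h : PowerLawAtoms Λ c γ μ) (hΛ : 0 < Λ) (hc : 0 ≤ c)
    (hγ : 0 ≤ γ) {ε : ℝ} (hε0 : 0 < ε) (hε1 : ε ≤ 1) {n : ℕ} (hn : 1 ≤ n) :
    ENNReal.ofReal (c * (Λ + 2) ^ (-γ) * ε ^ γ) ≤ μ (Ioo (lam Λ n - ε) (lam Λ n + ε)) := by
  set M := ⌈Λ / ε⌉₊ + 1
  have hM : 1 ≤ M := Nat.le_add_left 1 _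
  have hM0 : (0 : ℝ) < M := by exact_mod_cast hM
  have hMcast : (M : ℝ) = ⌈Λ / ε⌉₊ + 1 := by push_cast [M]; rfl
  have hMε : Λ / M < ε := by
    rw [div_lt_iff₀ hM0, ← div_lt_iff₀' hε0]
    linarith [Nat.le_ceil (Λ / ε)]
  have hMle : (M : ℝ) ≤ (Λ + 2) / ε := by
    have h2 : 2 ≤ 2 / ε := by rw [le_div_iff₀ hε0]; linarith
    rw [add_div]
    linarith [Nat.ceil_lt_add_one (div_pos hΛ hε0).le]
  refine le_trans (ENNReal.ofReal_le_ofReal ?_)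
    (h.ofReal_le_measure_Ioo_of_div_lt hΛ hc hγ hM hMε hn)
  have hpow : (Λ + 2) ^ (-γ) * ε ^ γ = ((Λ + 2) / ε) ^ (-γ) := by
    rw [Real.div_rpow (by linarith) hε0.le, Real.rpow_neg hε0.le, div_inv_eq_mul]
  rw [mul_assoc, hpow]
  exact mul_le_mul_of_nonneg_left (Real.rpow_le_rpow_of_nonpos hM0 hMle (by linarith)) hc

theorem fracIntegral_le (h : PowerLawAtoms Λ c γ μ) [IsFiniteMeasure μ] (hΛ : 0 < Λ)
    (hc : 0 < c) (hγ : 0 ≤ γ) (hq : q ≤ 1) {ε : ℝ} (hε0 : 0 < ε) (hε1 : ε ≤ 1) :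
    fracIntegral μ q ε ≤
      ENNReal.ofReal (μ.real univ * (c * (Λ + 2) ^ (-γ)) ^ (q - 1) * ε ^ (-(γ * (1 - q)))) := by
  have hae : ∀ᵐ x ∂μ, ∃ n, 1 ≤ n ∧ x = lam Λ n :=
    ae_iff.2 (h.measure_eq_zero _ fun n hn hx ↦ hx ⟨n, hn, rfl⟩)
  calc fracIntegral μ q ε ≤ μ univ * ENNReal.ofReal (c * (Λ + 2) ^ (-γ) * ε ^ γ) ^ (q - 1) := by
        refine fracIntegral_le_of_ae_le_measure_Ioo hq ?_
        filter_upwards [hae] with x ⟨n, hn, hx⟩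
        exact hx ▸ h.ofReal_le_measure_Ioo hΛ hc.le hγ hε0 hε1 hn
    _ = _ := by
        rw [← ofReal_measureReal, ENNReal.ofReal_rpow_of_pos (by positivity),
          ← ENNReal.ofReal_mul measureReal_nonneg, Real.mul_rpow (by positivity) (by positivity),
          ← Real.rpow_mul hε0.le]
        ring_nf

theorem isBoundedUnder_dimQuotient (h : PowerLawAtoms Λ c γ μ) [IsFiniteMeasure μ]
    (hΛ : 0 < Λ) (hc : 0 < c) (hγ : 0 ≤ γ) (hq : q < 1) :
    IsBoundedUnder (· ≤ ·) (𝓝[>] 0) (dimQuotient μ q) := by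
  have hμ : 0 < μ.real univ := by
    refine ENNReal.toReal_pos (ne_of_gt ?_) (measure_ne_top μ univ)
    refine lt_of_lt_of_le ?_ ((h.ofReal_le_atom 1 le_rfl).trans (measure_mono (subset_univ _)))
    simpa using hc
  exact _root_.isBoundedUnder_dimQuotient hq (by positivity) fun ε ⟨hε0, hε1⟩ ↦
    h.fracIntegral_le hΛ hc hγ hq.le hε0 hε1.le

theorem ofReal_le_fracIntegral (h : PowerLawAtoms Λ c γ μ) [IsFiniteMeasure μ] (hΛ : 0 < Λ)
    (hc : 0 < c) (hγ : 0 ≤ γ) (hq : 0 < q) {N : ℕ} (hN : 1 ≤ N) :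
    ENNReal.ofReal (c ^ q * (N : ℝ) ^ (1 - γ * q)) ≤ fracIntegral μ q (Λ / (2 * (N : ℝ) ^ 3)) := by
  have hN0 : (0 : ℝ) < N := by exact_mod_cast hN
  have hε : 0 < Λ / (2 * (N : ℝ) ^ 3) := by positivity
  have hatom : ∀ n, 1 ≤ n → 0 < μ {lam Λ n} := by
    intro n hn
    have hn0 : (0 : ℝ) < n := by exact_mod_cast hn
    exact lt_of_lt_of_le (ENNReal.ofReal_pos.2 (by positivity)) (h.ofReal_le_atom n hn)
  have hinj : InjOn (lam Λ) (Finset.Icc 1 N : Set ℕ) := by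
    intro m hm n hn hmn
    by_contra hne
    have := le_abs_lam_sub_lam hΛ (Finset.mem_Icc.1 hm).1 (Finset.mem_Icc.1 hn).1 hne
      (Finset.mem_Icc.1 hn).2
    rw [hmn, sub_self, abs_zero] at this
    exact this.not_gt hε
  calc ENNReal.ofReal (c ^ q * (N : ℝ) ^ (1 - γ * q))
      = ∑ _n ∈ Finset.Icc 1 N, ENNReal.ofReal (c * (N : ℝ) ^ (-γ)) ^ q := by
        rw [Finset.sum_const, Nat.card_Icc, add_tsub_cancel_right, nsmul_eq_mul,
          ENNReal.ofReal_rpow_of_pos (by positivity), ← ENNReal.ofReal_natCast,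
          ← ENNReal.ofReal_mul hN0.le, Real.mul_rpow hc.le (by positivity),
          ← Real.rpow_mul hN0.le, show 1 - γ * q = 1 + -γ * q by ring, Real.rpow_add hN0,
          Real.rpow_one]
        ring_nf
    _ ≤ ∑ n ∈ Finset.Icc 1 N, μ {lam Λ n} ^ q := by
        refine Finset.sum_le_sum fun n hn ↦ ENNReal.rpow_le_rpow ?_ hq.le
        obtain ⟨hn1, hnN⟩ := Finset.mem_Icc.1 hn
        have hn0 : (0 : ℝ) < n := by exact_mod_cast hn1
        refine le_trans (ENNReal.ofReal_le_ofReal ?_) (h.ofReal_le_atom n hn1)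
        exact mul_le_mul_of_nonneg_left
          (Real.rpow_le_rpow_of_nonpos hn0 (by exact_mod_cast hnN) (by linarith)) hc.le
    _ = ∑ n ∈ Finset.Icc 1 N, μ (Ioo (lam Λ n - Λ / (2 * (N : ℝ) ^ 3))
          (lam Λ n + Λ / (2 * (N : ℝ) ^ 3))) ^ (q - 1) * μ {lam Λ n} := by
        refine Finset.sum_congr rfl fun n hn ↦ ?_
        obtain ⟨hn1, hnN⟩ := Finset.mem_Icc.1 hn
        have hsplit := ENNReal.rpow_add_of_add_pos (measure_ne_top μ {lam Λ n}) (q - 1) 1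
          (by linarith)
        rw [sub_add_cancel, ENNReal.rpow_one] at hsplit
        rw [h.measure_Ioo_eq_atom hΛ hn1 hnN, hsplit]
    _ ≤ fracIntegral μ q (Λ / (2 * (N : ℝ) ^ 3)) := by
        rw [← Finset.sum_image (f := fun x ↦ μ (Ioo (x - Λ / (2 * (N : ℝ) ^ 3))
          (x + Λ / (2 * (N : ℝ) ^ 3))) ^ (q - 1) * μ {x}) hinj]
        refine sum_rpow_mul_le_fracIntegral _ ?_ hε
        simp only [Finset.mem_image, Finset.mem_Icc]
        rintro _ ⟨n, ⟨hn, -⟩, rfl⟩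
        exact hatom n hn

theorem le_Dupper (h : PowerLawAtoms Λ c γ μ) [IsFiniteMeasure μ] (hΛ : 0 < Λ) (hc : 0 < c)
    (hγ : 0 ≤ γ) (hq0 : 0 < q) (hq1 : q < 1) :
    (1 - γ * q) / (3 * (1 - q)) ≤ Dupper μ q := by
  have hlog : Tendsto (fun N : ℕ ↦ Real.log N) atTop atTop :=
    Real.tendsto_log_atTop.comp tendsto_natCast_atTop_atTop
  have hscale := tendsto_div_two_mul_pow_three_nhdsGT hΛ
  rw [Dupper_eq_limsup]
  refine le_limsup_of_tendsto_of_eventually_le (h.isBoundedUnder_dimQuotient hΛ hc hγ hq1) hscale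
    ((tendsto_add_mul_div_add_mul_atTop (q * Real.log c) (1 - γ * q)
      ((1 - q) * (Real.log 2 - Real.log Λ)) (3 * (1 - q)) (by nlinarith)).comp hlog) ?_
  filter_upwards [eventually_ge_atTop 1, hlog.eventually_gt_atTop (Real.log Λ - Real.log 2),
    hscale (Ioo_mem_nhdsGT one_pos)] with N hN hlogN ⟨hε0, hε1⟩
  have hN0 : (0 : ℝ) < N := by exact_mod_cast hN
  have hfin : fracIntegral μ q (Λ / (2 * (N : ℝ) ^ 3)) ≠ ⊤ :=
    ((h.fracIntegral_le hΛ hc hγ hq1.le hε0 hε1.le).trans_lt ENNReal.ofReal_lt_top).ne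
  have hnum : q * Real.log c + (1 - γ * q) * Real.log N ≤
      Real.log (fracIntegral μ q (Λ / (2 * (N : ℝ) ^ 3))).toReal := by
    rw [← Real.log_rpow hc, ← Real.log_rpow hN0, ← Real.log_mul (by positivity) (by positivity)]
    exact Real.log_le_log (by positivity)
      ((ENNReal.ofReal_le_iff_le_toReal hfin).1 (h.ofReal_le_fracIntegral hΛ hc hγ hq0 hN))
  have hden : (q - 1) * Real.log (Λ / (2 * (N : ℝ) ^ 3)) =
      (1 - q) * (Real.log 2 - Real.log Λ) + 3 * (1 - q) * Real.log N := by
    rw [Real.log_div hΛ.ne' (by positivity), Real.log_mul two_ne_zero (by positivity),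
      Real.log_pow]
    push_cast
    ring
  have hlogN0 : 0 ≤ Real.log N := Real.log_nonneg (by exact_mod_cast hN)
  rw [Function.comp_apply, dimQuotient, hden]
  exact div_le_div_of_nonneg_right hnum (by nlinarith)

end PowerLawAtoms

instance : Countable HIndex :=
  Function.Injective.countable (f := fun i : HIndex ↦ (i.n, i.l, i.m))
    fun ⟨_, _, _, _, _, _⟩ ⟨_, _, _, _, _, _⟩ h ↦ by
      simp only [Prod.mk.injEq] at h
      obtain ⟨rfl, rfl, rfl⟩ := h
      rfl

def HIndex.sOrbital (k : ℕ) : HIndex := ⟨k + 1, 0, 0, by omega, by omega, by simp⟩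

theorem HIndex.sOrbital_injective : Function.Injective HIndex.sOrbital := fun a b h ↦ by
  simpa [HIndex.sOrbital] using congrArg HIndex.n h

instance (Λ : ℝ) (ψ : Hspace) : IsFiniteMeasure (specMeasure Λ ψ) := by
  refine ⟨?_⟩
  rw [specMeasure, Measure.sum_apply _ MeasurableSet.univ]
  simp only [Measure.smul_apply, measure_univ, smul_eq_mul, mul_one]
  rw [← ENNReal.ofReal_tsum_of_nonneg (fun _ ↦ sq_nonneg _)
    (memℓp_two_iff_summable_norm_sq.1 (lp.memℓp ψ))]
  exact ENNReal.ofReal_lt_top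

theorem specMeasure_eq_zero {Λ : ℝ} (ψ : Hspace) {s : Set ℝ} (hs : ∀ i : HIndex, lam Λ i.n ∉ s) :
    specMeasure Λ ψ s = 0 :=
  Measure.sum_apply_eq_zero.2 fun i ↦ by simp [Measure.dirac_apply, hs i]

theorem ofReal_norm_sq_le_specMeasure (Λ : ℝ) (ψ : Hspace) (i : HIndex) :
    ENNReal.ofReal (‖ψ i‖ ^ 2) ≤ specMeasure Λ ψ {lam Λ i.n} :=
  calc ENNReal.ofReal (‖ψ i‖ ^ 2)
      = (ENNReal.ofReal (‖ψ i‖ ^ 2) • Measure.dirac (lam Λ i.n)) {lam Λ i.n} := by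
        simp
    _ ≤ specMeasure Λ ψ {lam Λ i.n} := (ENNReal.le_tsum i).trans (Measure.le_sum_apply _ _)

theorem powerLawAtoms_specMeasure {Λ c γ : ℝ} {φ : Hspace}
    (hφ : ∀ k : ℕ, c * ((k : ℝ) + 1) ^ (-γ) ≤ ‖φ (HIndex.sOrbital k)‖ ^ 2) :
    PowerLawAtoms Λ c γ (specMeasure Λ φ) := by
  refine ⟨fun _ hs ↦ specMeasure_eq_zero φ fun i ↦ hs i.n i.hn, fun n hn ↦ ?_⟩
  obtain ⟨k, rfl⟩ : ∃ k, n = k + 1 := ⟨n - 1, by omega⟩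
  refine le_trans (ENNReal.ofReal_le_ofReal ?_)
    (ofReal_norm_sq_le_specMeasure Λ φ (HIndex.sOrbital k))
  rw [Nat.cast_add_one]
  exact hφ k

theorem exists_norm_sub_sq_lt_and_le_sOrbital (ψ : Hspace) {γ δ : ℝ} (hγ : 1 < γ) (hδ : 0 < δ) :
    ∃ φ : Hspace, ‖ψ - φ‖ ^ 2 < δ ∧
      ∃ c > 0, ∀ k : ℕ, c * ((k : ℝ) + 1) ^ (-γ) ≤ ‖φ (HIndex.sOrbital k)‖ ^ 2 := by
  have hS : Summable fun k : ℕ ↦ ((k : ℝ) + 1) ^ (-γ) := by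
    simpa using (summable_nat_add_iff 1).2 (Real.summable_nat_rpow.2 (by linarith : -γ < -1))
  set S := ∑' k : ℕ, ((k : ℝ) + 1) ^ (-γ)
  have hS0 : 0 ≤ S := tsum_nonneg fun _ ↦ by positivity
  set c := δ / (4 * (S + 1))
  have hc : 0 < c := by positivity
  set r := Function.extend HIndex.sOrbital (fun k : ℕ ↦ c * ((k : ℝ) + 1) ^ (-γ)) 0
  have hr0 : ∀ i, 0 ≤ r i := by
    intro i
    by_cases hi : ∃ k, HIndex.sOrbital k = i
    · obtain ⟨k, rfl⟩ := hi
      simp only [r, HIndex.sOrbital_injective.extend_apply]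
      positivity
    · simp [r, Function.extend_apply' _ _ _ hi]
  obtain ⟨φ, hφr, hφψ⟩ := exists_lp_le_norm_sq_and_norm_sub_sq_le ψ hr0
    ((summable_extend_zero HIndex.sOrbital_injective).2 (hS.mul_left c))
  have hφ : ∀ k : ℕ, c * ((k : ℝ) + 1) ^ (-γ) ≤ ‖φ (HIndex.sOrbital k)‖ ^ 2 := fun k ↦ by
    simpa [r, HIndex.sOrbital_injective.extend_apply] using hφr (HIndex.sOrbital k)
  refine ⟨φ, ?_, c, hc, hφ⟩
  calc ‖ψ - φ‖ ^ 2 ≤ 4 * (c * S) := by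
        rwa [tsum_extend_zero HIndex.sOrbital_injective, tsum_mul_left] at hφψ
    _ = δ * (S / (S + 1)) := by simp only [c]; field_simp
    _ < δ := mul_lt_of_lt_one_right hδ ((div_lt_one (by linarith)).2 (by linarith))

theorem dense_upper_dimension_lower_bound
    (Λ : ℝ) (hΛ : 0 < Λ) (q : ℝ) (hq : q ∈ Ioo (0 : ℝ) 1)
    (j : ℕ) (hj : q / (1 - q) < (j : ℝ)) :
    (∀ ψ : Hspace, ∀ σ > (0 : ℝ), ∃ φ : Hspace,
        ‖ψ - φ‖ ^ 2 < 2 * σ ^ 2 ∧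
        (1 - (1 + 1 / (j : ℝ)) * q) / (3 * (1 - q)) ≤ Dupper (specMeasure Λ φ) q) ∧
      Dense {ψ : Hspace |
        (1 - (1 + 1 / (j : ℝ)) * q) / (3 * (1 - q)) ≤ Dupper (specMeasure Λ ψ) q} := by
  obtain ⟨hq0, hq1⟩ := hq
  have hj0 : 0 < (j : ℝ) := (div_pos hq0 (sub_pos.2 hq1)).trans hj
  have hγ : 1 < 1 + 1 / (j : ℝ) := lt_add_of_pos_right 1 (by positivity)
  have approx : ∀ ψ : Hspace, ∀ σ > (0 : ℝ), ∃ φ : Hspace, ‖ψ - φ‖ ^ 2 < 2 * σ ^ 2 ∧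
      (1 - (1 + 1 / (j : ℝ)) * q) / (3 * (1 - q)) ≤ Dupper (specMeasure Λ φ) q := by
    intro ψ σ hσ
    obtain ⟨φ, hφψ, c, hc, hφ⟩ :=
      exists_norm_sub_sq_lt_and_le_sOrbital ψ hγ (δ := 2 * σ ^ 2) (by positivity)
    exact ⟨φ, hφψ, (powerLawAtoms_specMeasure hφ).le_Dupper hΛ hc (by linarith) hq0 hq1⟩
  refine ⟨approx, Metric.dense_iff.2 fun ψ r hr ↦ ?_⟩
  obtain ⟨φ, hφψ, hφ⟩ := approx ψ (r / 2) (by positivity)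
  refine ⟨φ, ?_, hφ⟩
  rw [Metric.mem_ball, dist_comm, dist_eq_norm]
  nlinarith [norm_nonneg (ψ - φ)]
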